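/- arXiv:2002.06985 — 3 statements merged into one kernel-verified Lean document; each statement's English description precedes it below -/
import Mathlib

section
/- Let 1 ≤ s ≤ d and let k_1, …, k_s be linearly independent vectors in ℝ^d with |k_j| ≤ K for all j, for some K > 0. Let Vol(k_1,…,k_s) denote the s-dimensional volume of the parallelepiped with sides k_1,…,k_s. Then for any vector w in the span of k_1,…,k_s, writing α = max_j |w·k_j|, one has ‖w‖ ≤ s K^{s-1} α / Vol(k_1,…,k_s). -/
/-!
Write `w = ∑ cᵢ kᵢ` and `G` for the Gram matrix of the `kᵢ`. Then `cᵢ = ⟪k*ᵢ, w⟫` for the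
dual vectors `k*ᵢ = ∑ⱼ (G⁻¹)ᵢⱼ kⱼ`, whose squared lengths are `(G⁻¹)ᵢᵢ`, so by Cauchy–Schwarz
`cᵢ² ≤ (G⁻¹)ᵢᵢ ‖w‖²`. By Cramer's rule `(G⁻¹)ᵢᵢ` is the Gram determinant of the other
`s - 1` vectors divided by `det G`, and Hadamard's inequality bounds the former by `K^{2(s-1)}`.
Finally `‖w‖² = ∑ cᵢ ⟪w, kᵢ⟫ ≤ α ∑ |cᵢ|`, and dividing by `‖w‖` gives the estimate.
-/

open scoped RealInnerProductSpace
open Matrix Module Submodule InnerProductSpace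

theorem Matrix.inv_apply_self_eq_det_submatrix_div {𝕜 : Type*} [Field 𝕜] {n : ℕ}
    (A : Matrix (Fin (n + 1)) (Fin (n + 1)) 𝕜) (i : Fin (n + 1)) :
    A⁻¹ i i = (A.submatrix i.succAbove i.succAbove).det / A.det := by
  rw [inv_def, Ring.inverse_eq_inv', smul_apply, adjugate_fin_succ_eq_det_submatrix,
    ← two_mul, pow_mul, neg_one_sq, one_pow, one_mul, smul_eq_mul, inv_mul_eq_div]

section Gram

variable {E : Type*} [NormedAddCommGroup E] [InnerProductSpace ℝ E]

theorem det_gram_le_prod_norm_sq {ι : Type*} [Fintype ι] [LinearOrder ι]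
    [LocallyFiniteOrderBot ι] (v : ι → E) :
    (gram ℝ v).det ≤ ∏ i, ‖v i‖ ^ 2 := by
  by_cases hv : LinearIndependent ℝ v
  swap
  · rw [not_not.1 (mt det_gram_ne_zero_iff_linearIndependent.1 hv)]
    positivity
  set W := span ℝ (Set.range v)
  have : FiniteDimensional ℝ W := FiniteDimensional.span_of_finite ℝ (Set.finite_range v)
  let u : ι → W := fun i => ⟨v i, subset_span ⟨i, rfl⟩⟩
  -- In the Gram–Schmidt basis of `W` the coordinate matrix of `u` is triangular.
  let b := gramSchmidtOrthonormalBasis (finrank_span_eq_card hv) u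
  have hgram : gram ℝ v = gram ℝ u := rfl
  have hdet : (of fun i j => b.repr (u j) i).det = b.toBasis.det u := by
    rw [Basis.det_apply]
    rfl
  rw [hgram, gram_eq_conjTranspose_mul b, det_mul, det_conjTranspose, star_trivial, ← sq, hdet,
    gramSchmidtOrthonormalBasis_det, ← Finset.prod_pow]
  refine Finset.prod_le_prod (fun i _ => sq_nonneg _) fun i _ => ?_
  calc ⟪b i, u i⟫ ^ 2 ≤ (‖b i‖ * ‖u i‖) ^ 2 := by
        rw [← sq_abs]
        gcongr
        exact abs_real_inner_le_norm _ _
    _ = ‖v i‖ ^ 2 := by rw [b.orthonormal.1 i, one_mul]; rfl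

theorem inv_gram_apply_self_le {n : ℕ} {v : Fin n → E} {K : ℝ} (hK : ∀ j, ‖v j‖ ≤ K)
    (i : Fin n) : (gram ℝ v)⁻¹ i i ≤ (K ^ (n - 1)) ^ 2 / (gram ℝ v).det := by
  obtain ⟨m, rfl⟩ := Nat.exists_eq_succ_of_ne_zero i.pos.ne'
  rw [inv_apply_self_eq_det_submatrix_div]
  refine div_le_div_of_nonneg_right ?_ (posSemidef_gram ℝ v).det_nonneg
  calc (gram ℝ (v ∘ i.succAbove)).det ≤ ∏ j, ‖v (i.succAbove j)‖ ^ 2 :=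
        det_gram_le_prod_norm_sq _
    _ ≤ ∏ _j : Fin m, K ^ 2 :=
        Finset.prod_le_prod (fun _ _ => sq_nonneg _)
          fun j _ => pow_le_pow_left₀ (norm_nonneg _) (hK _) 2
    _ = (K ^ (m + 1 - 1)) ^ 2 := by
        rw [Fin.prod_const, Nat.add_sub_cancel, ← pow_mul, ← pow_mul, mul_comm]

theorem sq_le_inv_gram_apply_mul_norm_sum_smul_sq {ι : Type*} [Fintype ι] [DecidableEq ι]
    {v : ι → E} (hv : LinearIndependent ℝ v) (c : ι → ℝ) (i : ι) :
    c i ^ 2 ≤ (gram ℝ v)⁻¹ i i * ‖∑ j, c j • v j‖ ^ 2 := by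
  set G := gram ℝ v
  have hG : IsUnit G.det := (posDef_gram_of_linearIndependent hv).det_pos.ne'.isUnit
  have hdual (x : ι → ℝ) : ⟪∑ j, G⁻¹ i j • v j, ∑ j, x j • v j⟫ = x i := by
    rw [← star_dotProduct_gram_mulVec, star_trivial]
    change (G⁻¹ *ᵥ (G *ᵥ x)) i = x i
    rw [mulVec_mulVec, nonsing_inv_mul G hG, one_mulVec]
  calc c i ^ 2 = ⟪∑ j, G⁻¹ i j • v j, ∑ j, c j • v j⟫ ^ 2 := by rw [hdual]
    _ ≤ ‖∑ j, G⁻¹ i j • v j‖ ^ 2 * ‖∑ j, c j • v j‖ ^ 2 := by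
        rw [← mul_pow, ← sq_abs]
        gcongr
        exact abs_real_inner_le_norm _ _
    _ = G⁻¹ i i * ‖∑ j, c j • v j‖ ^ 2 := by rw [← real_inner_self_eq_norm_sq, hdual]

theorem norm_sum_smul_le_of_abs_le {ι : Type*} [Fintype ι] (v : ι → E) (c : ι → ℝ)
    {α β : ℝ} (hα : 0 ≤ α) (hβ : 0 ≤ β) (hc : ∀ i, |c i| ≤ β * ‖∑ j, c j • v j‖)
    (hv : ∀ i, |⟪∑ j, c j • v j, v i⟫| ≤ α) :
    ‖∑ j, c j • v j‖ ≤ Fintype.card ι * β * α := by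
  set w := ∑ j, c j • v j
  have hsq : ‖w‖ * ‖w‖ ≤ ‖w‖ * (Fintype.card ι * β * α) :=
    calc ‖w‖ * ‖w‖ = ∑ i, c i * ⟪w, v i⟫ := by
          rw [← real_inner_self_eq_norm_mul_norm, inner_sum]
          simp only [real_inner_smul_right]
      _ ≤ ∑ i, |c i| * |⟪w, v i⟫| := Finset.sum_le_sum fun i _ => by
          rw [← abs_mul]
          exact le_abs_self _
      _ ≤ ∑ _i : ι, β * ‖w‖ * α := Finset.sum_le_sum fun i _ =>
          mul_le_mul (hc i) (hv i) (abs_nonneg _) (by positivity)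
      _ = ‖w‖ * (Fintype.card ι * β * α) := by
          rw [Finset.sum_const, Finset.card_univ, nsmul_eq_mul]
          ring
  rcases (norm_nonneg w).eq_or_lt with hw | hw
  · rw [← hw]
    positivity
  · exact le_of_mul_le_mul_left hsq hw

end Gram

theorem parallelepiped_estimate_general
    (d s : ℕ) (K : ℝ) (hK : 0 < K)
    (k : Fin s → EuclideanSpace ℝ (Fin d))
    (hind : LinearIndependent ℝ k)
    (hKbound : ∀ j, ‖k j‖ ≤ K)
    (w : EuclideanSpace ℝ (Fin d))
    (hw : w ∈ Submodule.span ℝ (Set.range k))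
    (α : ℝ)
    (hα : α = ⨆ j : Fin s, |⟪w, k j⟫|) :
    ‖w‖ ≤ s * K ^ (s - 1) * α /
      Real.sqrt ((Matrix.of fun i j : Fin s => ⟪k i, k j⟫).det) := by
  obtain ⟨c, rfl⟩ := (mem_span_range_iff_exists_fun ℝ).1 hw
  have hdet : 0 < (gram ℝ k).det := (posDef_gram_of_linearIndependent hind).det_pos
  set β := K ^ (s - 1) / Real.sqrt (gram ℝ k).det
  have hβ : 0 ≤ β := by positivity
  have hcoeff (i : Fin s) : |c i| ≤ β * ‖∑ j, c j • k j‖ := by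
    refine abs_le_of_sq_le_sq ?_ (by positivity)
    calc c i ^ 2 ≤ (gram ℝ k)⁻¹ i i * ‖∑ j, c j • k j‖ ^ 2 :=
          sq_le_inv_gram_apply_mul_norm_sum_smul_sq hind c i
      _ ≤ (K ^ (s - 1)) ^ 2 / (gram ℝ k).det * ‖∑ j, c j • k j‖ ^ 2 := by
          gcongr
          exact inv_gram_apply_self_le hKbound i
      _ = (β * ‖∑ j, c j • k j‖) ^ 2 := by rw [mul_pow, div_pow, Real.sq_sqrt hdet.le]
  have hinner (i : Fin s) : |⟪∑ j, c j • k j, k i⟫| ≤ α :=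
    hα ▸ le_ciSup (f := fun l => |⟪∑ j, c j • k j, k l⟫|) (Set.finite_range _).bddAbove i
  have hα0 : 0 ≤ α := hα ▸ Real.iSup_nonneg fun _ => abs_nonneg _
  calc ‖∑ j, c j • k j‖ ≤ Fintype.card (Fin s) * β * α :=
        norm_sum_smul_le_of_abs_le k c hα0 hβ hcoeff hinner
    _ = _ := by
        rw [Fintype.card_fin]
        change _ = s * K ^ (s - 1) * α / Real.sqrt (gram ℝ k).det
        ring

/-- Giorgilli's parallelepiped lemma: if `k 1, …, k s` are linearly independent
vectors in `ℝ^d` of norm at most `K`, `w` lies in their span and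
`α` is the maximum of `|w · k j|`, then
`‖w‖ ≤ s K^{s-1} α / Vol(k_1,…,k_s)`, where the volume of the parallelepiped is
the square root of the Gram determinant. -/
theorem parallelepiped_estimate
    (d s : ℕ) (hs1 : 1 ≤ s) (hsd : s ≤ d) (K : ℝ) (hK : 0 < K)
    (k : Fin s → EuclideanSpace ℝ (Fin d))
    (hind : LinearIndependent ℝ k)
    (hKbound : ∀ j, ‖k j‖ ≤ K)
    (w : EuclideanSpace ℝ (Fin d))
    (hw : w ∈ Submodule.span ℝ (Set.range k))
    (α : ℝ)
    (hα : α = ⨆ j : Fin s, |⟪w, k j⟫|) :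
    ‖w‖ ≤ s * K ^ (s - 1) * α /
      Real.sqrt ((Matrix.of fun i j : Fin s => ⟪k i, k j⟫).det) :=
  parallelepiped_estimate_general d s K hK k hind hKbound w hw α hα
end

section
/- Let w ∈ ℝ^d lie in the span of linearly independent integer vectors k_1,…,k_s ∈ ℤ^d with |k_j| ≤ K, and suppose |w·k_j| ≤ α for all j = 1,…,s. Then ‖w‖ ≤ s K^{s-1} α. -/
open scoped RealInnerProductSpace

/-!
Write `w = ∑ cⱼ kⱼ`. Replacing `kⱼ` by `w` in the family multiplies its Gram determinant by `cⱼ²`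
(Cramer's rule), so Hadamard's inequality `det S ≤ ∏ Sᵢᵢ` for positive semidefinite `S` gives
`cⱼ² det G(k) ≤ ‖w‖² ∏_{i ≠ j} ‖kᵢ‖² ≤ ‖w‖² K^{2(s-1)}`. The Gram matrix of linearly independent
integer vectors has a positive integer determinant, so `|cⱼ| ≤ K^{s-1} ‖w‖`, and then
`‖w‖² = ∑ cⱼ ⟪w, kⱼ⟫ ≤ K^{s-1} ‖w‖ ∑ |⟪w, kⱼ⟫| ≤ s K^{s-1} α ‖w‖`.
-/

open Finset Matrix

namespace Matrix

section Hadamard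

variable {n : Type*} [LinearOrder n] [WellFoundedLT n] [LocallyFiniteOrderBot n] [Fintype n]

theorem PosDef.det_le_prod_diag {S : Matrix n n ℝ} (hS : S.PosDef) : S.det ≤ ∏ i, S i i := by
  set L := LDL.lower hS
  set D := LDL.diagEntries hS
  have hD : ∀ i, 0 ≤ D i := fun i => by
    simpa [D, LDL.diagEntries, EuclideanSpace.inner_toLp_toLp, dotProduct_comm] using
      hS.posSemidef.dotProduct_mulVec_nonneg (star (LDL.lowerInv hS i))
  have hL : L.IsLowerTriangular :=
    blockTriangular_inv_of_blockTriangular fun _ _ hij => LDL.lowerInv_triangular hS hij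
  have hS_eq : S = L * diagonal D * Lᴴ := (LDL.lower_conj_diag hS).symm
  have hdet : S.det = ∏ i, L i i ^ 2 * D i := by
    rw [hS_eq, det_mul, det_mul, det_conjTranspose, det_of_isLowerTriangular _ hL, det_diagonal]
    simp only [star_trivial, ← prod_mul_distrib]
    exact prod_congr rfl fun i _ => by ring
  have hdiag : ∀ i, S i i = ∑ j, L i j ^ 2 * D j := fun i => by
    rw [hS_eq]
    simp [mul_apply, diagonal_apply, sq, mul_comm, mul_left_comm]
  rw [hdet]
  refine prod_le_prod (fun i _ => mul_nonneg (sq_nonneg _) (hD i)) fun i _ => ?_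
  rw [hdiag]
  exact single_le_sum (fun j _ => mul_nonneg (sq_nonneg _) (hD j)) (mem_univ i)

end Hadamard

variable {n : Type*} [Fintype n] [DecidableEq n]

theorem PosSemidef.det_le_prod_diag {S : Matrix n n ℝ} (hS : S.PosSemidef) :
    S.det ≤ ∏ i, S i i := by
  let e := Fintype.equivFin n
  have hS' : (S.submatrix e.symm e.symm).PosSemidef := hS.submatrix e.symm
  by_cases h : (S.submatrix e.symm e.symm).det = 0
  · rw [det_submatrix_equiv_self] at h
    exact h ▸ prod_nonneg fun i _ => hS.diag_nonneg
  · have := (hS'.posDef_iff_det_ne_zero.mpr h).det_le_prod_diag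
    rw [det_submatrix_equiv_self] at this
    exact this.trans_eq (e.symm.prod_comp fun i => S i i)

variable {E : Type*} [NormedAddCommGroup E] [InnerProductSpace ℝ E]

theorem det_gram_le_prod_norm_sq (v : n → E) : (gram ℝ v).det ≤ ∏ i, ‖v i‖ ^ 2 := by
  simpa only [gram_apply, real_inner_self_eq_norm_sq] using
    (posSemidef_gram ℝ v).det_le_prod_diag

omit [DecidableEq n] in
theorem gram_sum_smul {m : Type*} (v : n → E) (M : Matrix n m ℝ) :
    gram ℝ (fun a => ∑ p, M p a • v p) = Mᵀ * gram ℝ v * M := by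
  ext a b
  simp only [gram_apply, sum_inner, inner_sum, real_inner_smul_left, real_inner_smul_right,
    mul_apply, transpose_apply, sum_mul]
  exact sum_congr rfl fun p _ => sum_congr rfl fun q _ => by ring

theorem det_gram_update_sum_smul (v : n → E) (c : n → ℝ) (j : n) :
    (gram ℝ (Function.update v j (∑ i, c i • v i))).det = c j ^ 2 * (gram ℝ v).det := by
  set M : Matrix n n ℝ := (1 : Matrix n n ℝ).updateCol j c
  have hM : M.det = c j := by
    simpa [M, one_apply] using det_updateCol_sum (1 : Matrix n n ℝ) j c
  have hv : Function.update v j (∑ i, c i • v i) = fun a => ∑ p, M p a • v p := by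
    ext1 a
    rcases eq_or_ne a j with rfl | ha
    · simp [M]
    · simp [M, ha, one_apply]
  rw [hv, gram_sum_smul, det_mul, det_mul, det_transpose, hM]
  ring

theorem sq_mul_det_gram_le (v : n → E) (c : n → ℝ) (j : n) :
    c j ^ 2 * (gram ℝ v).det ≤ ‖∑ i, c i • v i‖ ^ 2 * ∏ i ∈ univ.erase j, ‖v i‖ ^ 2 := by
  rw [← det_gram_update_sum_smul]
  refine (det_gram_le_prod_norm_sq _).trans_eq ?_
  rw [← mul_prod_erase _ _ (mem_univ j), Function.update_self]
  congr 1
  exact prod_congr rfl fun i hi => by rw [Function.update_of_ne (ne_of_mem_erase hi)]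

theorem abs_coeff_le_of_one_le_det_gram {v : n → E} {K : ℝ} (hK : ∀ i, ‖v i‖ ≤ K)
    (hdet : 1 ≤ (gram ℝ v).det) {c : n → ℝ} {w : E} (hw : ∑ i, c i • v i = w) (j : n) :
    |c j| ≤ K ^ (Fintype.card n - 1) * ‖w‖ := by
  have hK0 : 0 ≤ K := (norm_nonneg _).trans (hK j)
  refine abs_le_of_sq_le_sq ?_ (by positivity)
  calc c j ^ 2 ≤ c j ^ 2 * (gram ℝ v).det := le_mul_of_one_le_right (sq_nonneg _) hdet
    _ ≤ ‖w‖ ^ 2 * ∏ i ∈ univ.erase j, ‖v i‖ ^ 2 := hw ▸ sq_mul_det_gram_le v c j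
    _ ≤ ‖w‖ ^ 2 * ∏ i ∈ univ.erase j, K ^ 2 := by
      gcongr with i
      exact hK i
    _ = (K ^ (Fintype.card n - 1) * ‖w‖) ^ 2 := by
      rw [prod_const, card_erase_of_mem (mem_univ j), card_univ]
      ring

theorem one_le_det_gram_of_int {ι : Type*} [Fintype ι]
    {v : n → EuclideanSpace ℝ ι} (hint : ∀ j i, ∃ m : ℤ, v j i = m)
    (hv : LinearIndependent ℝ v) : 1 ≤ (gram ℝ v).det := by
  choose f hf using hint
  have hgram : gram ℝ v = (of fun a b => ∑ i, f a i * f b i : Matrix n n ℤ).map Int.cast := by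
    ext a b
    simp [PiLp.inner_apply, hf, mul_comm]
  have hpos := (posDef_gram_of_linearIndependent hv).det_pos
  rw [hgram, ← Int.cast_det] at hpos ⊢
  exact_mod_cast Int.cast_pos.mp hpos

end Matrix

theorem norm_le_mul_sum_abs_inner_of_abs_coeff_le {n E : Type*} [Fintype n]
    [NormedAddCommGroup E] [InnerProductSpace ℝ E] {v : n → E} {c : n → ℝ} {w : E}
    (hw : ∑ i, c i • v i = w) {C : ℝ} (hc : ∀ j, |c j| ≤ C * ‖w‖) : ‖w‖ ≤ C * ∑ j, |⟪w, v j⟫| := by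
  rcases (norm_nonneg w).eq_or_lt with hw0 | hw0
  · obtain rfl : w = 0 := norm_eq_zero.mp hw0.symm
    simp
  refine le_of_mul_le_mul_right ?_ hw0
  calc ‖w‖ * ‖w‖ = ⟪w, ∑ i, c i • v i⟫ := by rw [hw, real_inner_self_eq_norm_mul_norm]
    _ = ∑ j, c j * ⟪w, v j⟫ := by simp only [inner_sum, real_inner_smul_right]
    _ ≤ ∑ j, (C * ‖w‖) * |⟪w, v j⟫| := sum_le_sum fun j _ =>
        (le_abs_self _).trans ((abs_mul _ _).trans_le
          (mul_le_mul_of_nonneg_right (hc j) (abs_nonneg _)))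
    _ = C * (∑ j, |⟪w, v j⟫|) * ‖w‖ := by
      rw [mul_sum, sum_mul]
      exact sum_congr rfl fun j _ => by ring

theorem span_int_vectors_estimate_general
    (d s : ℕ) (K : ℝ)
    (k : Fin s → EuclideanSpace ℝ (Fin d))
    (hint : ∀ j i, ∃ n : ℤ, k j i = n)
    (hind : LinearIndependent ℝ k)
    (hKbound : ∀ j, ‖k j‖ ≤ K)
    (w : EuclideanSpace ℝ (Fin d))
    (hw : w ∈ Submodule.span ℝ (Set.range k))
    (α : ℝ)
    (hα : ∀ j, |⟪w, k j⟫| ≤ α) :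
    ‖w‖ ≤ s * K ^ (s - 1) * α := by
  obtain ⟨c, hc⟩ := (Submodule.mem_span_range_iff_exists_fun ℝ).mp hw
  have hcoeff : ∀ j, |c j| ≤ K ^ (s - 1) * ‖w‖ := by
    simpa only [Fintype.card_fin] using
      abs_coeff_le_of_one_le_det_gram hKbound (one_le_det_gram_of_int hint hind) hc
  have hK0 : 0 ≤ K ^ (s - 1) := by
    cases s with
    | zero => simp
    | succ s => exact pow_nonneg ((norm_nonneg _).trans (hKbound 0)) _
  calc ‖w‖ ≤ K ^ (s - 1) * ∑ j, |⟪w, k j⟫| :=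
        norm_le_mul_sum_abs_inner_of_abs_coeff_le hc hcoeff
    _ ≤ K ^ (s - 1) * ∑ _j : Fin s, α := by gcongr with j; exact hα j
    _ = s * K ^ (s - 1) * α := by
      rw [sum_const, card_univ, Fintype.card_fin, nsmul_eq_mul]
      ring

/-- If `w` lies in the span of linearly independent integer vectors
`k 1, …, k s` of norm at most `K`, and `|w · k j| ≤ α` for every `j`,
then `‖w‖ ≤ s K^{s-1} α`. -/
theorem span_int_vectors_estimate
    (d s : ℕ) (hs1 : 1 ≤ s) (hsd : s ≤ d) (K : ℝ) (hK : 0 < K)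
    (k : Fin s → EuclideanSpace ℝ (Fin d))
    (hint : ∀ j i, ∃ n : ℤ, k j i = n)
    (hind : LinearIndependent ℝ k)
    (hKbound : ∀ j, ‖k j‖ ≤ K)
    (w : EuclideanSpace ℝ (Fin d))
    (hw : w ∈ Submodule.span ℝ (Set.range k))
    (α : ℝ)
    (hα : ∀ j, |⟪w, k j⟫| ≤ α) :
    ‖w‖ ≤ s * K ^ (s - 1) * α :=
  span_int_vectors_estimate_general d s K k hint hind hKbound w hw α hα
end

section
/- Let M ⊆ ℤ^d be a module of dimension s ≥ 1 and suppose p, p' ∈ ℝ^d satisfy p − p' ∈ span_ℝ M, and that there exist linearly independent vectors k_1,…,k_s ∈ M with |k_j| ≤ K such that |p·k_j| ≤ C ε^{δ_s} and |p'·k_j'| ≤ C ε^{δ_s} for some (possibly different) linearly independent k_1',…,k_s' ∈ M with |k_j'| ≤ K. Then |p − p'| ≤ 2 s K^{s-1} C ε^{δ_s}. -/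
/-!
Let `V = span_ℝ M`. Since `p - p' ∈ V`, it is the difference of the orthogonal projections
of `p` and `p'` onto `V`, and the projection `w` of `p` still satisfies
`|⟪w, k_j⟫| ≤ C ε^{δ_s}`. As the `k_j` span `V`, `w = ∑ ⟪w, k_j⟫ e_j` for the dual basis
`(e_j)` of `V`, so it suffices to show `‖e_j‖ ≤ K^{s-1}`. Ordering the `k_i` so that `k_j`
comes last, `e_j` is the last Gram–Schmidt vector `g` divided by `‖g‖²`. The Gram determinant
of the integer vectors `k_i` is a positive integer, hence at least `1`, and it is the product
of the squared norms of the Gram–Schmidt vectors, all of which are at most `K`; thus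
`‖g‖ ≥ K^{-(s-1)}`.
-/
open scoped RealInnerProductSpace
open InnerProductSpace Matrix Submodule Set

variable {E : Type*} [NormedAddCommGroup E] [InnerProductSpace ℝ E]

theorem Matrix.gram_sum_smul_s9 {ι κ : Type*} [Fintype κ] (P : Matrix ι κ ℝ) (v : κ → E) :
    gram ℝ (fun i => ∑ k, P i k • v k) = P * gram ℝ v * Pᵀ := by
  ext i j
  simp only [gram_apply, mul_apply, transpose_apply, sum_inner, inner_sum,
    real_inner_smul_left, real_inner_smul_right, Finset.sum_mul]
  refine Finset.sum_congr rfl fun k _ => Finset.sum_congr rfl fun l _ => by ring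

theorem Matrix.gram_eq_diagonal {ι : Type*} [DecidableEq ι] {v : ι → E}
    (hv : Pairwise fun i j => ⟪v i, v j⟫ = 0) : gram ℝ v = diagonal fun i => ‖v i‖ ^ 2 := by
  ext i j
  rcases eq_or_ne i j with rfl | hij
  · simp
  · simp [hv hij, hij]

theorem Matrix.one_le_det_gram_of_linearIndependent {ι : Type*} [Fintype ι] [DecidableEq ι]
    {u : ι → E} (hu : LinearIndependent ℝ u) (hZ : ∀ i j, ∃ z : ℤ, ⟪u i, u j⟫ = z) :
    1 ≤ (gram ℝ u).det := by
  choose z hz using hZ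
  have hdet : (gram ℝ u).det = ((of z).det : ℝ) := by
    rw [show gram ℝ u = (Int.castRingHom ℝ).mapMatrix (of z) by ext i j; simp [hz],
      ← RingHom.map_det, eq_intCast]
  have hpos : 0 < (of z).det := by
    exact_mod_cast hdet ▸ (posDef_gram_of_linearIndependent hu).det_pos
  rw [hdet]
  exact_mod_cast hpos

section GramSchmidt

variable {ι : Type*} [LinearOrder ι] [LocallyFiniteOrderBot ι] [WellFoundedLT ι]

theorem real_inner_gramSchmidt_self (u : ι → E) (n : ι) :
    ⟪gramSchmidt ℝ u n, u n⟫ = ‖gramSchmidt ℝ u n‖ ^ 2 := by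
  conv_lhs => rw [gramSchmidt_def'' ℝ u n]
  rw [inner_add_right, real_inner_self_eq_norm_sq, inner_sum, add_eq_left]
  refine Finset.sum_eq_zero fun i hi => ?_
  rw [real_inner_smul_right, gramSchmidt_orthogonal ℝ u (Finset.mem_Iio.1 hi).ne', mul_zero]

theorem norm_gramSchmidt_le (u : ι → E) (n : ι) : ‖gramSchmidt ℝ u n‖ ≤ ‖u n‖ := by
  have h := real_inner_gramSchmidt_self u n ▸ real_inner_le_norm (gramSchmidt ℝ u n) (u n)
  nlinarith [norm_nonneg (gramSchmidt ℝ u n), norm_nonneg (u n)]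

noncomputable def gramSchmidtCoeff (u : ι → E) : Matrix ι ι ℝ :=
  of fun n i => if i < n then ⟪gramSchmidt ℝ u i, u n⟫ / ‖gramSchmidt ℝ u i‖ ^ 2
    else if i = n then 1 else 0

variable [Fintype ι]

theorem sum_gramSchmidtCoeff_smul (u : ι → E) (n : ι) :
    ∑ i, gramSchmidtCoeff u n i • gramSchmidt ℝ u i = u n := by
  conv_rhs => rw [gramSchmidt_def'' ℝ u n]
  simp only [gramSchmidtCoeff, of_apply, ite_smul, one_smul, zero_smul, Finset.sum_ite,
    Finset.filter_gt_eq_Iio, Finset.filter_filter, Finset.sum_const_zero, add_zero]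
  rw [add_comm]
  congr 1
  exact Finset.sum_eq_single_of_mem n (by simp) fun i hi hin =>
    (hin (Finset.mem_filter.1 hi).2.2).elim

theorem det_gramSchmidtCoeff (u : ι → E) : (gramSchmidtCoeff u).det = 1 := by
  rw [det_of_isLowerTriangular _ fun i j hji => by
    have hij : i < j := hji
    simp [gramSchmidtCoeff, hij.not_gt, hij.ne']]
  simp [gramSchmidtCoeff]

theorem det_gram_eq_prod_norm_gramSchmidt_sq (u : ι → E) :
    (gram ℝ u).det = ∏ i, ‖gramSchmidt ℝ u i‖ ^ 2 := by
  conv_lhs => rw [← funext (sum_gramSchmidtCoeff_smul u), gram_sum_smul_s9,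
    gram_eq_diagonal (gramSchmidt_pairwise_orthogonal ℝ u)]
  rw [det_mul, det_mul, det_transpose, det_diagonal, det_gramSchmidtCoeff, one_mul, mul_one]

end GramSchmidt

theorem one_le_pow_mul_norm_gramSchmidt_last {n : ℕ} {K : ℝ} {u : Fin (n + 1) → E}
    (hu : LinearIndependent ℝ u) (hZ : ∀ i j, ∃ z : ℤ, ⟪u i, u j⟫ = z)
    (huK : ∀ i, ‖u i‖ ≤ K) : 1 ≤ K ^ n * ‖gramSchmidt ℝ u (Fin.last n)‖ := by
  have hK : 0 ≤ K := (norm_nonneg _).trans (huK 0)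
  have hinit : ∏ i : Fin n, ‖gramSchmidt ℝ u i.castSucc‖ ^ 2 ≤ (K ^ n) ^ 2 := by
    rw [← pow_mul, pow_mul', ← Fin.prod_const]
    exact Finset.prod_le_prod (fun _ _ => by positivity) fun i _ =>
      pow_le_pow_left₀ (norm_nonneg _) ((norm_gramSchmidt_le u _).trans (huK _)) 2
  have hsq : 1 ≤ (K ^ n * ‖gramSchmidt ℝ u (Fin.last n)‖) ^ 2 :=
    calc 1 ≤ (gram ℝ u).det := one_le_det_gram_of_linearIndependent hu hZ
      _ = (∏ i : Fin n, ‖gramSchmidt ℝ u i.castSucc‖ ^ 2) *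
          ‖gramSchmidt ℝ u (Fin.last n)‖ ^ 2 := by
        rw [det_gram_eq_prod_norm_gramSchmidt_sq, Fin.prod_univ_castSucc]
      _ ≤ (K ^ n) ^ 2 * ‖gramSchmidt ℝ u (Fin.last n)‖ ^ 2 := by gcongr
      _ = _ := by ring
  exact (one_le_sq_iff₀ (by positivity)).1 hsq

theorem exists_biorthogonal_vector_last {n : ℕ} {K : ℝ} {u : Fin (n + 1) → E}
    (hu : LinearIndependent ℝ u) (hZ : ∀ i j, ∃ z : ℤ, ⟪u i, u j⟫ = z)
    (huK : ∀ i, ‖u i‖ ≤ K) :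
    ∃ e ∈ span ℝ (range u), (∀ i, ⟪e, u i⟫ = if i = Fin.last n then 1 else 0) ∧
      ‖e‖ ≤ K ^ n := by
  set g := gramSchmidt ℝ u (Fin.last n)
  have hg : 0 < ‖g‖ := norm_pos_iff.2 (gramSchmidt_ne_zero _ hu)
  refine ⟨(‖g‖ ^ 2)⁻¹ • g, smul_mem _ _ <|
    span_mono (image_subset_range _ _) (gramSchmidt_mem_span ℝ u le_rfl), fun i => ?_, ?_⟩
  · rw [real_inner_smul_left]
    split_ifs with hi
    · rw [hi, real_inner_gramSchmidt_self, inv_mul_cancel₀ (by positivity)]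
    · rw [gramSchmidt_inv_triangular ℝ u (Fin.lt_last_iff_ne_last.2 hi), mul_zero]
  · rw [norm_smul, norm_inv, norm_pow, norm_norm, sq, mul_inv, inv_mul_cancel_right₀ hg.ne',
      inv_le_iff_one_le_mul₀ hg]
    exact one_le_pow_mul_norm_gramSchmidt_last hu hZ huK

theorem exists_biorthogonal_vector {n : ℕ} {K : ℝ} {u : Fin (n + 1) → E}
    (hu : LinearIndependent ℝ u) (hZ : ∀ i j, ∃ z : ℤ, ⟪u i, u j⟫ = z)
    (huK : ∀ i, ‖u i‖ ≤ K) (j : Fin (n + 1)) :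
    ∃ e ∈ span ℝ (range u), (∀ i, ⟪e, u i⟫ = if i = j then 1 else 0) ∧ ‖e‖ ≤ K ^ n := by
  -- Gram–Schmidt yields the dual vector of the last index; relabel so that `j` is last.
  let σ := Equiv.swap j (Fin.last n)
  obtain ⟨e, he, hdual, hnorm⟩ := exists_biorthogonal_vector_last (u := u ∘ σ)
    (hu.comp σ σ.injective) (fun _ _ => hZ _ _) (fun _ => huK _)
  refine ⟨e, by rwa [range_comp, σ.range_eq_univ, image_univ] at he, fun i => ?_, hnorm⟩
  simpa [σ, Equiv.swap_apply_eq_iff] using hdual (σ i)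

theorem eq_sum_inner_smul_of_biorthogonal {ι : Type*} [Fintype ι] [DecidableEq ι] {u e : ι → E}
    (he : ∀ j, e j ∈ span ℝ (range u)) (hdual : ∀ j i, ⟪e j, u i⟫ = if i = j then 1 else 0)
    {w : E} (hw : w ∈ span ℝ (range u)) : w = ∑ j, ⟪w, u j⟫ • e j := by
  set z := w - ∑ j, ⟪w, u j⟫ • e j
  have hz : z ∈ span ℝ (range u) := sub_mem hw (sum_mem fun j _ => smul_mem _ _ (he j))
  have hker : span ℝ (range u) ≤ LinearMap.ker (innerₛₗ ℝ z) :=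
    span_le.2 <| range_subset_iff.2 fun i => by simp [z, hdual]
  exact sub_eq_zero.1 (inner_self_eq_zero.1 (hker hz))

theorem norm_le_of_abs_inner_le {s : ℕ} {K a : ℝ} {u : Fin s → E}
    (hu : LinearIndependent ℝ u) (hZ : ∀ i j, ∃ z : ℤ, ⟪u i, u j⟫ = z)
    (huK : ∀ i, ‖u i‖ ≤ K) {w : E} (hw : w ∈ span ℝ (range u))
    (hwu : ∀ j, |⟪w, u j⟫| ≤ a) : ‖w‖ ≤ s * K ^ (s - 1) * a := by
  cases s with
  | zero => simp_all
  | succ n =>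
    choose e he hdual hnorm using exists_biorthogonal_vector hu hZ huK
    calc ‖w‖ = ‖∑ j, ⟪w, u j⟫ • e j‖ := by rw [← eq_sum_inner_smul_of_biorthogonal he hdual hw]
      _ ≤ ∑ j, ‖⟪w, u j⟫ • e j‖ := norm_sum_le _ _
      _ ≤ ∑ _j : Fin (n + 1), a * K ^ n := Finset.sum_le_sum fun j _ => by
        rw [norm_smul, Real.norm_eq_abs]
        exact mul_le_mul (hwu j) (hnorm j) (norm_nonneg _) ((abs_nonneg _).trans (hwu j))
      _ = _ := by simp; ring

theorem norm_starProjection_le {s : ℕ} {K a : ℝ} {V : Submodule ℝ E}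
    [V.HasOrthogonalProjection] {u : Fin s → E} (hV : span ℝ (range u) = V)
    (hu : LinearIndependent ℝ u) (hZ : ∀ i j, ∃ z : ℤ, ⟪u i, u j⟫ = z)
    (huK : ∀ i, ‖u i‖ ≤ K) (q : E) (hq : ∀ j, |⟪q, u j⟫| ≤ a) :
    ‖V.starProjection q‖ ≤ s * K ^ (s - 1) * a :=
  norm_le_of_abs_inner_le hu hZ huK (hV ▸ starProjection_apply_mem V q) fun j => by
    have hj : u j ∈ V := hV ▸ subset_span (mem_range_self j)
    rw [inner_starProjection_left_eq_right, starProjection_eq_self_iff.2 hj]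
    exact hq j

theorem Submodule.span_range_eq_of_linearIndependent {K V ι : Type*} [DivisionRing K]
    [AddCommGroup V] [Module K V] [Fintype ι] {W : Submodule K V} [FiniteDimensional K W]
    {u : ι → V} (hu : LinearIndependent K u) (huW : ∀ i, u i ∈ W)
    (hW : Module.finrank K W = Fintype.card ι) : span K (range u) = W :=
  eq_of_le_of_finrank_eq (span_le.2 (range_subset_iff.2 huW))
    (by rw [finrank_span_eq_card hu, hW])

theorem EuclideanSpace.exists_int_inner_eq {ι κ : Type*} [Fintype ι]
    {u : κ → EuclideanSpace ℝ ι}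
    (hu : ∀ j, u j ∈ range fun m : ι → ℤ => WithLp.toLp 2 fun i => (m i : ℝ)) (i j : κ) :
    ∃ z : ℤ, ⟪u i, u j⟫ = z := by
  obtain ⟨m, hm⟩ := hu i
  obtain ⟨m', hm'⟩ := hu j
  rw [← hm, ← hm']
  exact ⟨m ⬝ᵥ m', by simp [dotProduct, PiLp.inner_apply, mul_comm]⟩

theorem extended_blocks_close_to_blocks_general
    (d s : ℕ) (K C ε δs : ℝ)
    (M : Set (Fin d → ℤ))
    (hdim : Module.finrank ℝ (Submodule.span ℝ
      ((fun (m : Fin d → ℤ) => (WithLp.toLp 2 (fun i => (m i : ℝ)) :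
        EuclideanSpace ℝ (Fin d))) '' M)) = s)
    (p p' : EuclideanSpace ℝ (Fin d))
    (hdiff : p - p' ∈ Submodule.span ℝ
      ((fun (m : Fin d → ℤ) => (WithLp.toLp 2 (fun i => (m i : ℝ)) :
        EuclideanSpace ℝ (Fin d))) '' M))
    (k k' : Fin s → EuclideanSpace ℝ (Fin d))
    (hkM : ∀ j, k j ∈ (fun (m : Fin d → ℤ) => (WithLp.toLp 2 (fun i => (m i : ℝ)) :
      EuclideanSpace ℝ (Fin d))) '' M)
    (hk'M : ∀ j, k' j ∈ (fun (m : Fin d → ℤ) => (WithLp.toLp 2 (fun i => (m i : ℝ)) :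
      EuclideanSpace ℝ (Fin d))) '' M)
    (hkind : LinearIndependent ℝ k) (hk'ind : LinearIndependent ℝ k')
    (hkK : ∀ j, ‖k j‖ ≤ K) (hk'K : ∀ j, ‖k' j‖ ≤ K)
    (hres : ∀ j, |⟪p, k j⟫| ≤ C * ε ^ δs)
    (hres' : ∀ j, |⟪p', k' j⟫| ≤ C * ε ^ δs) :
    ‖p - p'‖ ≤ 2 * s * K ^ (s - 1) * C * ε ^ δs := by
  set V := span ℝ ((fun (m : Fin d → ℤ) => (WithLp.toLp 2 (fun i => (m i : ℝ)) :
    EuclideanSpace ℝ (Fin d))) '' M)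
  have hdimV : Module.finrank ℝ V = Fintype.card (Fin s) := by rw [hdim, Fintype.card_fin]
  have hp : ‖V.starProjection p‖ ≤ s * K ^ (s - 1) * (C * ε ^ δs) :=
    norm_starProjection_le
      (span_range_eq_of_linearIndependent hkind (fun j => subset_span (hkM j)) hdimV) hkind
      (EuclideanSpace.exists_int_inner_eq fun j => image_subset_range _ _ (hkM j)) hkK p hres
  have hp' : ‖V.starProjection p'‖ ≤ s * K ^ (s - 1) * (C * ε ^ δs) :=
    norm_starProjection_le
      (span_range_eq_of_linearIndependent hk'ind (fun j => subset_span (hk'M j)) hdimV) hk'ind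
      (EuclideanSpace.exists_int_inner_eq fun j => image_subset_range _ _ (hk'M j)) hk'K p' hres'
  calc ‖p - p'‖ = ‖V.starProjection p - V.starProjection p'‖ := by
        rw [← map_sub, starProjection_eq_self_iff.2 hdiff]
    _ ≤ _ := norm_sub_le_of_le hp hp'
    _ = _ := by ring

/-- If `p` and `p'` differ by a vector of `span_ℝ M`, for a module
`M ⊆ ℤ^d` of dimension `s ≥ 1`, and both are resonant at level `C ε^{δ_s}`
with `s` linearly independent vectors of `M` of norm at most `K`, then
`|p − p'| ≤ 2 s K^{s-1} C ε^{δ_s}`. -/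
theorem extended_blocks_close_to_blocks
    (d s : ℕ) (hs : 1 ≤ s) (K C ε δs : ℝ) (hK : 1 ≤ K) (hC : 0 < C)
    (hε : 0 < ε)
    (M : Set (Fin d → ℤ))
    (hM : ∀ v : Fin d → ℤ,
      ((WithLp.toLp 2 (fun i => (v i : ℝ)) : EuclideanSpace ℝ (Fin d)) ∈ Submodule.span ℝ
        ((fun (m : Fin d → ℤ) => (WithLp.toLp 2 (fun i => (m i : ℝ)) :
          EuclideanSpace ℝ (Fin d))) '' M)) → v ∈ M)
    (hdim : Module.finrank ℝ (Submodule.span ℝ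
      ((fun (m : Fin d → ℤ) => (WithLp.toLp 2 (fun i => (m i : ℝ)) :
        EuclideanSpace ℝ (Fin d))) '' M)) = s)
    (p p' : EuclideanSpace ℝ (Fin d))
    (hdiff : p - p' ∈ Submodule.span ℝ
      ((fun (m : Fin d → ℤ) => (WithLp.toLp 2 (fun i => (m i : ℝ)) :
        EuclideanSpace ℝ (Fin d))) '' M))
    (k k' : Fin s → EuclideanSpace ℝ (Fin d))
    (hkM : ∀ j, k j ∈ (fun (m : Fin d → ℤ) => (WithLp.toLp 2 (fun i => (m i : ℝ)) :
      EuclideanSpace ℝ (Fin d))) '' M)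
    (hk'M : ∀ j, k' j ∈ (fun (m : Fin d → ℤ) => (WithLp.toLp 2 (fun i => (m i : ℝ)) :
      EuclideanSpace ℝ (Fin d))) '' M)
    (hkind : LinearIndependent ℝ k) (hk'ind : LinearIndependent ℝ k')
    (hkK : ∀ j, ‖k j‖ ≤ K) (hk'K : ∀ j, ‖k' j‖ ≤ K)
    (hres : ∀ j, |⟪p, k j⟫| ≤ C * ε ^ δs)
    (hres' : ∀ j, |⟪p', k' j⟫| ≤ C * ε ^ δs) :
    ‖p - p'‖ ≤ 2 * s * K ^ (s - 1) * C * ε ^ δs :=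
  extended_blocks_close_to_blocks_general d s K C ε δs M hdim p p' hdiff k k' hkM hk'M hkind hk'ind
    hkK hk'K hres hres'
end
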